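/- arXiv:2012.11772 — 2 statements merged into one kernel-verified Lean document; each statement's English description precedes it below -/
import Mathlib

section
/- Sufficiency direction of the GBPD–assignment correspondence (Theorem 1): suppose ξ is a binary feasible solution of the primal program (P) (ξ_{ij} ∈ {0,1}, Σ_i ξ_{ij} = 1 for all j, Σ_j ξ_{ij} = κ_i for all i) and there exists a parameter vector μ ∈ ℝ^k such that the GBPD with parameters (A_i, s_i, μ_i) induces ξ, i.e., ξ_{ij} = 1 implies ‖x_j − s_i‖²_{A_i} − μ_i ≤ ‖x_j − s_l‖²_{A_l} − μ_l for all l ∈ [k]. Then ξ is an optimal solution of (P): for every feasible solution ζ of (P), Σ_{i,j} ξ_{ij}‖x_j − s_i‖²_{A_i} ≤ Σ_{i,j} ζ_{ij}‖x_j − s_i‖²_{A_i}. -/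
open Matrix

/-!
Subtracting the potential `μ i` from every cost in row `i` changes the total cost of any plan
with row sums `κ` by the same constant `∑ i, μ i * κ i`. After this shift the diagram condition
says that, in every column, the plan `ξ` puts its unit mass on a smallest shifted cost, whereas
any other plan only averages the shifted costs of that column, which is never smaller.
-/

section Transport

variable {ι α : Type*} [Fintype ι] [Fintype α]

theorem sum_sum_mul_eq_sum_sum_mul_sub_add (η c : ι → α → ℝ) (μ κ : ι → ℝ)
    (hrow : ∀ i, ∑ j, η i j = κ i) :
    ∑ i, ∑ j, η i j * c i j = ∑ j, ∑ i, η i j * (c i j - μ i) + ∑ i, μ i * κ i := by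
  have hshift : ∀ i, ∑ j, η i j * (c i j - μ i) = ∑ j, η i j * c i j - μ i * κ i := by
    intro i
    simp only [mul_sub, Finset.sum_sub_distrib, ← Finset.sum_mul, hrow i, mul_comm]
  rw [Finset.sum_comm (f := fun j i => η i j * (c i j - μ i))]
  simp only [hshift, Finset.sum_sub_distrib, sub_add_cancel]

theorem sum_mul_le_of_sum_eq_one {p r : ι → ℝ} {M : ℝ} (hp : ∀ i, 0 ≤ p i)
    (hsum : ∑ i, p i = 1) (hr : ∀ i, p i ≠ 0 → r i ≤ M) : ∑ i, p i * r i ≤ M := by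
  calc ∑ i, p i * r i ≤ ∑ i, p i * M := by
        refine Finset.sum_le_sum fun i _ => ?_
        by_cases hpi : p i = 0
        · simp [hpi]
        · exact mul_le_mul_of_nonneg_left (hr i hpi) (hp i)
    _ = M := by rw [← Finset.sum_mul, hsum, one_mul]

theorem le_sum_mul_of_sum_eq_one {p r : ι → ℝ} {m : ℝ} (hp : ∀ i, 0 ≤ p i)
    (hsum : ∑ i, p i = 1) (hr : ∀ i, m ≤ r i) : m ≤ ∑ i, p i * r i := by
  calc m = ∑ i, p i * m := by rw [← Finset.sum_mul, hsum, one_mul]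
    _ ≤ ∑ i, p i * r i := by gcongr with i; exacts [hp i, hr i]

theorem sum_mul_le_sum_mul_of_binary {ξ p r : ι → ℝ} (hξbin : ∀ i, ξ i = 0 ∨ ξ i = 1)
    (hξsum : ∑ i, ξ i = 1) (hξmin : ∀ i, ξ i = 1 → ∀ l, r i ≤ r l)
    (hp : ∀ i, 0 ≤ p i) (hpsum : ∑ i, p i = 1) :
    ∑ i, ξ i * r i ≤ ∑ i, p i * r i := by
  have hξone : ∀ i, ξ i ≠ 0 → ξ i = 1 := fun i hi => (hξbin i).resolve_left hi
  obtain ⟨i₀, -, hi₀⟩ := Finset.exists_ne_zero_of_sum_ne_zero (hξsum ▸ one_ne_zero)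
  have hξnonneg : ∀ i, 0 ≤ ξ i := fun i => by rcases hξbin i with h | h <;> simp [h]
  calc ∑ i, ξ i * r i ≤ r i₀ :=
        sum_mul_le_of_sum_eq_one hξnonneg hξsum fun i hi => hξmin i (hξone i hi) i₀
    _ ≤ ∑ i, p i * r i := le_sum_mul_of_sum_eq_one hp hpsum (hξmin i₀ (hξone i₀ hi₀))

theorem sum_sum_mul_le_of_binary_of_potential {ξ ζ c : ι → α → ℝ} {κ : ι → ℝ} (μ : ι → ℝ)
    (hξbin : ∀ i j, ξ i j = 0 ∨ ξ i j = 1) (hξcol : ∀ j, ∑ i, ξ i j = 1)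
    (hξrow : ∀ i, ∑ j, ξ i j = κ i)
    (hξmin : ∀ i j, ξ i j = 1 → ∀ l, c i j - μ i ≤ c l j - μ l)
    (hζ : ∀ i j, 0 ≤ ζ i j) (hζcol : ∀ j, ∑ i, ζ i j = 1) (hζrow : ∀ i, ∑ j, ζ i j = κ i) :
    ∑ i, ∑ j, ξ i j * c i j ≤ ∑ i, ∑ j, ζ i j * c i j := by
  rw [sum_sum_mul_eq_sum_sum_mul_sub_add ξ c μ κ hξrow,
    sum_sum_mul_eq_sum_sum_mul_sub_add ζ c μ κ hζrow]
  refine add_le_add_left (Finset.sum_le_sum fun j _ => ?_) _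
  exact sum_mul_le_sum_mul_of_binary (hξbin · j) (hξcol j) (hξmin · j) (hζ · j) (hζcol j)

end Transport

theorem gbpd_induced_binary_assignment_is_optimal_general
    {d k N : ℕ}
    (x : Fin N → Fin d → ℝ) (s : Fin k → Fin d → ℝ)
    (A : Fin k → Matrix (Fin d) (Fin d) ℝ)
    (κ : Fin k → ℝ)
    (ξ : Fin k → Fin N → ℝ)
    (hξbin : ∀ i j, ξ i j = 0 ∨ ξ i j = 1)
    (hξcol : ∀ j, ∑ i, ξ i j = 1)
    (hξrow : ∀ i, ∑ j, ξ i j = κ i)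
    (μ : Fin k → ℝ)
    (hinduce : ∀ i j, ξ i j = 1 → ∀ l : Fin k,
      (x j - s i) ⬝ᵥ (A i).mulVec (x j - s i) - μ i ≤
        (x j - s l) ⬝ᵥ (A l).mulVec (x j - s l) - μ l) :
    ∀ ζ : Fin k → Fin N → ℝ,
      (∀ i j, 0 ≤ ζ i j) → (∀ j, ∑ i, ζ i j = 1) → (∀ i, ∑ j, ζ i j = κ i) →
      ∑ i, ∑ j, ξ i j * ((x j - s i) ⬝ᵥ (A i).mulVec (x j - s i)) ≤
        ∑ i, ∑ j, ζ i j * ((x j - s i) ⬝ᵥ (A i).mulVec (x j - s i)) :=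
  fun _ hζ hζcol hζrow =>
    sum_sum_mul_le_of_binary_of_potential μ hξbin hξcol hξrow hinduce hζ hζcol hζrow

/-- Sufficiency direction of the GBPD–assignment correspondence: a binary feasible
assignment induced by a generalized balanced power diagram is optimal for (P). -/
theorem gbpd_induced_binary_assignment_is_optimal
    {d k N : ℕ}
    (x : Fin N → Fin d → ℝ) (s : Fin k → Fin d → ℝ)
    (A : Fin k → Matrix (Fin d) (Fin d) ℝ)
    (hA : ∀ i, (A i).PosDef)
    (κ : Fin k → ℝ) (hκ : ∀ i, 0 ≤ κ i) (hκsum : ∑ i, κ i = (N : ℝ))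
    (ξ : Fin k → Fin N → ℝ)
    (hξbin : ∀ i j, ξ i j = 0 ∨ ξ i j = 1)
    (hξcol : ∀ j, ∑ i, ξ i j = 1)
    (hξrow : ∀ i, ∑ j, ξ i j = κ i)
    (μ : Fin k → ℝ)
    (hinduce : ∀ i j, ξ i j = 1 → ∀ l : Fin k,
      (x j - s i) ⬝ᵥ (A i).mulVec (x j - s i) - μ i ≤
        (x j - s l) ⬝ᵥ (A l).mulVec (x j - s l) - μ l) :
    ∀ ζ : Fin k → Fin N → ℝ,
      (∀ i j, 0 ≤ ζ i j) → (∀ j, ∑ i, ζ i j = 1) → (∀ i, ∑ j, ζ i j = κ i) →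
      ∑ i, ∑ j, ξ i j * ((x j - s i) ⬝ᵥ (A i).mulVec (x j - s i)) ≤
        ∑ i, ∑ j, ζ i j * ((x j - s i) ⬝ᵥ (A i).mulVec (x j - s i)) :=
  gbpd_induced_binary_assignment_is_optimal_general x s A κ ξ hξbin hξcol hξrow μ hinduce
end

section
/- Necessity direction of the GBPD–assignment correspondence (Theorem 1, choice μ = λ*): suppose ξ* is a binary feasible solution of the primal program (P), (λ*, η*) is a feasible solution of the dual program (D), and the two objective values coincide (so both are optimal). Then the GBPD with parameters (A_i, s_i, λ*_i) induces the assignment ξ*: for all i ∈ [k], j ∈ [N], if ξ*_{ij} = 1 then ‖x_j − s_i‖²_{A_i} − λ*_i ≤ ‖x_j − s_l‖²_{A_l} − λ*_l for all l ∈ [k], i.e., x_j lies in cell P_i of that GBPD. -/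
open Matrix

/-- Necessity direction of the GBPD–assignment correspondence (with μ = λ*):
an optimal binary primal solution together with an optimal dual solution yields a
generalized balanced power diagram that induces the assignment. -/
theorem optimal_dual_gbpd_induces_assignment
    {d k N : ℕ}
    (x : Fin N → Fin d → ℝ) (s : Fin k → Fin d → ℝ)
    (A : Fin k → Matrix (Fin d) (Fin d) ℝ)
    (hA : ∀ i, (A i).PosDef)
    (κ : Fin k → ℝ) (hκ : ∀ i, 0 ≤ κ i) (hκsum : ∑ i, κ i = (N : ℝ))
    (ξ : Fin k → Fin N → ℝ)
    (hξbin : ∀ i j, ξ i j = 0 ∨ ξ i j = 1)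
    (hξcol : ∀ j, ∑ i, ξ i j = 1)
    (hξrow : ∀ i, ∑ j, ξ i j = κ i)
    (lam : Fin k → ℝ) (η : Fin N → ℝ)
    (hdual : ∀ i j, lam i + η j ≤ (x j - s i) ⬝ᵥ (A i).mulVec (x j - s i))
    (hobj : ∑ i, ∑ j, ξ i j * ((x j - s i) ⬝ᵥ (A i).mulVec (x j - s i)) =
      ∑ i, κ i * lam i + ∑ j, η j) :
    ∀ i j, ξ i j = 1 → ∀ l : Fin k,
      (x j - s i) ⬝ᵥ (A i).mulVec (x j - s i) - lam i ≤
        (x j - s l) ⬝ᵥ (A l).mulVec (x j - s l) - lam l := by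
  set c : Fin k → Fin N → ℝ :=
    fun i j => (x j - s i) ⬝ᵥ (A i).mulVec (x j - s i) with hc
  -- Each slack term ξ i j * (c i j - lam i - η j) is nonneg and they sum to 0.
  have hnn : ∀ p ∈ Finset.univ (α := Fin k × Fin N),
      0 ≤ ξ p.1 p.2 * (c p.1 p.2 - lam p.1 - η p.2) := by
    intro p _
    have h1 : 0 ≤ ξ p.1 p.2 := by rcases hξbin p.1 p.2 with h | h <;> simp [h]
    have h2 : 0 ≤ c p.1 p.2 - lam p.1 - η p.2 := by
      have := hdual p.1 p.2; linarith
    exact mul_nonneg h1 h2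
  have hsum0 : ∑ p : Fin k × Fin N, ξ p.1 p.2 * (c p.1 p.2 - lam p.1 - η p.2) = 0 := by
    rw [Fintype.sum_prod_type]
    have e1 : ∑ i, ∑ j, ξ i j * (c i j - lam i - η j)
        = (∑ i, ∑ j, ξ i j * c i j) - (∑ i, ∑ j, ξ i j * lam i)
          - (∑ i, ∑ j, ξ i j * η j) := by
      simp [Finset.sum_sub_distrib, mul_sub]
    have e2 : ∑ i, ∑ j, ξ i j * lam i = ∑ i, κ i * lam i := by
      refine Finset.sum_congr rfl fun i _ => ?_
      rw [← Finset.sum_mul, hξrow i]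
    have e3 : ∑ i, ∑ j, ξ i j * η j = ∑ j, η j := by
      rw [Finset.sum_comm]
      refine Finset.sum_congr rfl fun j _ => ?_
      rw [← Finset.sum_mul, hξcol j, one_mul]
    rw [e1, e2, e3, hobj]
    ring
  have hzero := (Finset.sum_eq_zero_iff_of_nonneg hnn).mp hsum0
  intro i j hij l
  have hi : c i j - lam i - η j = 0 := by
    have := hzero (i, j) (Finset.mem_univ _)
    simpa [hij] using this
  have hl := hdual l j
  have : c i j - lam i = η j := by linarith
  have : c i j - lam i ≤ c l j - lam l := by linarith
  simpa [hc] using this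
end
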